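/- If the augmented mixture has component vectors with ψ̃_h^{(j)}(0) = q for all h and j (constant missing probability q across components and coordinates), then the missingness indicators of the coordinates are i.i.d. Bernoulli(q) and independent of the underlying rescaled data vector — i.e., constant missing-category probability in the latent class model implies MCAR. -/
import Mathlib


open Finset

open scoped Classical in
/-- Constant missing-category probability implies MCAR: if every augmented component
vector puts the same mass `q < 1` on the missing category `0`, then the augmented
mixture factorizes as the product of i.i.d. Bernoulli(q) missingness indicators and
the rescaled data mixture (so missingness is independent of the data), and the
probability of any missingness pattern `ρ` is `∏_j q^{1-ρ_j}(1-q)^{ρ_j}`. -/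
theorem constant_missing_prob_implies_mcar
    (p k : ℕ) (d : Fin p → ℕ) (q : ℝ) (hq0 : 0 ≤ q) (hq1 : q < 1)
    (θ : Fin k → ℝ) (hθ0 : ∀ h, 0 ≤ θ h) (hθ1 : ∑ h, θ h = 1)
    (ψt : Fin k → ∀ j : Fin p, Fin (d j + 1) → ℝ)
    (hψ0 : ∀ h j a, 0 ≤ ψt h j a)
    (hψ1 : ∀ h j, ∑ a, ψt h j a = 1)
    (hconst : ∀ h j, ψt h j 0 = q) :
    -- the augmented mixture factorizes: Bernoulli(q) masking × rescaled data mixture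
    (∀ xt : (∀ j, Fin (d j + 1)),
      ∑ h, θ h * ∏ j, ψt h j (xt j)
        = (∏ j, (if xt j = 0 then q else 1 - q)) *
            (∑ h, θ h * ∏ j, (if xt j = 0 then 1 else ψt h j (xt j) / (1 - q)))) ∧
    -- the missingness pattern has the i.i.d. Bernoulli(q) distribution
    (∀ ρ : Fin p → Bool,
      ∑ xt : (∀ j, Fin (d j + 1)),
          (if (∀ j, (xt j = 0) ↔ (ρ j = false)) then ∑ h, θ h * ∏ j, ψt h j (xt j) else 0)
        = ∏ j, (if ρ j then 1 - q else q)) := by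
  have hne : (1 : ℝ) - q ≠ 0 := by linarith
  constructor
  · intro xt
    rw [Finset.mul_sum]
    apply Finset.sum_congr rfl
    intro h _
    rw [mul_left_comm, ← Finset.prod_mul_distrib]
    congr 1
    apply Finset.prod_congr rfl
    intro j _
    by_cases hx : xt j = 0
    · simp [hx, hconst h j]
    · simp only [hx, if_false]
      field_simp
  · intro ρ
    have key : ∀ xt : (∀ j, Fin (d j + 1)),
        (if (∀ j, (xt j = 0) ↔ (ρ j = false)) then ∑ h, θ h * ∏ j, ψt h j (xt j) else 0)
          = ∑ h, θ h * ∏ j, ((if ((xt j = 0) ↔ (ρ j = false)) then (1:ℝ) else 0)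
              * ψt h j (xt j)) := by
      intro xt
      by_cases hall : ∀ j, (xt j = 0) ↔ (ρ j = false)
      · simp [hall]
      · obtain ⟨j0, hj0⟩ := not_forall.mp hall
        rw [if_neg hall]
        symm
        apply Finset.sum_eq_zero
        intro h _
        rw [Finset.prod_eq_zero (Finset.mem_univ j0) (by simp [hj0]), mul_zero]
    rw [Finset.sum_congr rfl (fun xt _ => key xt), Finset.sum_comm]
    have step : ∀ h : Fin k,
        ∑ xt : (∀ j, Fin (d j + 1)), θ h * ∏ j, ((if ((xt j = 0) ↔ (ρ j = false)) then (1:ℝ) else 0)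
            * ψt h j (xt j)) = θ h * ∏ j, (if ρ j then 1 - q else q) := by
      intro h
      rw [← Finset.mul_sum, ← Fintype.prod_sum fun j a => (if ((a = 0) ↔ (ρ j = false)) then (1:ℝ) else 0) * ψt h j a]
      congr 1
      apply Finset.prod_congr rfl
      intro j _
      cases hr : ρ j
      · simp only [hr]
        rw [Finset.sum_eq_single (0 : Fin (d j + 1))]
        · simp [hconst h j]
        · intro b _ hb; simp [hb]
        · simp
      · simp only [hr]
        have : ∑ a : Fin (d j + 1), ((if ((a = 0) ↔ (true = false)) then (1:ℝ) else 0)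
            * ψt h j a) = ∑ a : Fin (d j + 1), (ψt h j a - if a = 0 then ψt h j a else 0) := by
          apply Finset.sum_congr rfl
          intro a _
          by_cases ha : a = 0 <;> simp [ha]
        rw [this, Finset.sum_sub_distrib, hψ1 h j, Finset.sum_ite_eq' Finset.univ (0 : Fin (d j+1))]
        simp [hconst h j]
    rw [Finset.sum_congr rfl (fun h _ => step h), ← Finset.sum_mul, hθ1, one_mul]
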